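/- For every w ∈ ℝ⁵ one has 3·|S[w]| ≤ ‖w‖³. In particular, if ‖w‖ = 1 then 1 − 3·S[w] ≥ 0. -/

import Mathlib

/-- The cubic polynomial `S[w]` on `ℝ⁵`. -/
noncomputable def S5 (w : EuclideanSpace ℝ (Fin 5)) : ℝ :=
  -(w 2) * ((w 0) ^ 2 + (w 1) ^ 2) + Real.sqrt 3 * w 1 * w 3 * w 4 +
    (1 / 2) * w 2 * ((w 3) ^ 2 + (w 4) ^ 2) + (1 / 3) * (w 2) ^ 3 +
    (Real.sqrt 3 / 2) * w 0 * ((w 3) ^ 2 - (w 4) ^ 2)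

set_option maxHeartbeats 2000000 in
lemma sos_key (a b c d e s : ℝ) (hs : s ^ 2 = 3) :
    12 * ((a^2 + b^2 + c^2 + d^2 + e^2)^3 -
      9 * (-c * (a^2 + b^2) + s * b * d * e + (1/2) * c * (d^2 + e^2) +
        (1/3) * c^3 + (s/2) * a * (d^2 - e^2))^2) =
      14 * ((-1)*d^2*e*s + 3*b*c*d + b^2*e*s + a*b*d*s)^2 +
      14 * ((-1)*b*e^2*s + b*d^2*s + (-2)*a*d*e*s)^2 +
      14 * ((-1)*d*e^2*s + 3*b*c*e + b^2*d*s + (-1)*a*b*e*s)^2 +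
      2 * ((-3)*c*d*e + b*e^2*s + 3*b*c^2*s + (-1)*b^3*s + a*d*e*s + (-1)*a^2*b*s)^2 +
      2 * ((-1)*d*e^2*s + d^3*s + (-6)*a*c*d + (-2)*a*b*e*s + (-2)*a^2*d*s)^2 +
      2 * ((-1)*e^3*s + d^2*e*s + (-6)*a*c*e + (-2)*a*b*d*s + 2*a^2*e*s)^2 +
      1 * ((-3)*c*e^2 + 3*c*d^2 + (-1)*a*e^2*s + (-1)*a*d^2*s + (-6)*a*c^2*s + 2*a*b^2*s + 2*a^3*s)^2 +
      2 * ((-1)*e^3*s + 3*b*c*d + b^2*e*s + (-6)*a*c*e + (-1)*a*b*d*s + 2*a^2*e*s)^2 +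
      2 * ((-3)*c*d*e + b*d^2*s + 3*b*c^2*s + (-1)*b^3*s + (-1)*a*d*e*s + (-1)*a^2*b*s)^2 +
      2 * ((-1)*d^3*s + 3*b*c*e + b^2*d*s + 6*a*c*d + a*b*e*s + 2*a^2*d*s)^2 := by
  linear_combination ((-4)*e^6 + (-12)*d^2*e^4 + (-12)*d^4*e^2 + (-4)*d^6 + (-12)*b^2*e^4 + (-24)*b^2*d^2*e^2 + (-12)*b^2*d^4 + (-12)*b^2*c^2*e^2 + (-12)*b^2*c^2*d^2 + (-36)*b^2*c^4 + (-12)*b^4*e^2 + (-12)*b^4*d^2 + 24*b^4*c^2 + (-4)*b^6 + (-12)*a^2*e^4 + (-24)*a^2*d^2*e^2 + (-12)*a^2*d^4 + (-12)*a^2*c^2*e^2 + (-12)*a^2*c^2*d^2 + (-36)*a^2*c^4 + (-24)*a^2*b^2*e^2 + (-24)*a^2*b^2*d^2 + 48*a^2*b^2*c^2 + (-12)*a^2*b^4 + (-12)*a^4*e^2 + (-12)*a^4*d^2 + 24*a^4*c^2 + (-12)*a^4*b^2 + (-4)*a^6) * hs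

lemma sos_nonneg (a b c d e s : ℝ) (hs : s ^ 2 = 3) :
    9 * (-c * (a^2 + b^2) + s * b * d * e + (1/2) * c * (d^2 + e^2) +
        (1/3) * c^3 + (s/2) * a * (d^2 - e^2))^2 ≤ (a^2 + b^2 + c^2 + d^2 + e^2)^3 := by
  linarith [sos_key a b c d e s hs,
    sq_nonneg ((-1)*d^2*e*s + 3*b*c*d + b^2*e*s + a*b*d*s),
    sq_nonneg ((-1)*b*e^2*s + b*d^2*s + (-2)*a*d*e*s),
    sq_nonneg ((-1)*d*e^2*s + 3*b*c*e + b^2*d*s + (-1)*a*b*e*s),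
    sq_nonneg ((-3)*c*d*e + b*e^2*s + 3*b*c^2*s + (-1)*b^3*s + a*d*e*s + (-1)*a^2*b*s),
    sq_nonneg ((-1)*d*e^2*s + d^3*s + (-6)*a*c*d + (-2)*a*b*e*s + (-2)*a^2*d*s),
    sq_nonneg ((-1)*e^3*s + d^2*e*s + (-6)*a*c*e + (-2)*a*b*d*s + 2*a^2*e*s),
    sq_nonneg ((-3)*c*e^2 + 3*c*d^2 + (-1)*a*e^2*s + (-1)*a*d^2*s + (-6)*a*c^2*s + 2*a*b^2*s + 2*a^3*s),
    sq_nonneg ((-1)*e^3*s + 3*b*c*d + b^2*e*s + (-6)*a*c*e + (-1)*a*b*d*s + 2*a^2*e*s),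
    sq_nonneg ((-3)*c*d*e + b*d^2*s + 3*b*c^2*s + (-1)*b^3*s + (-1)*a*d*e*s + (-1)*a^2*b*s),
    sq_nonneg ((-1)*d^3*s + 3*b*c*e + b^2*d*s + 6*a*c*d + a*b*e*s + 2*a^2*d*s)]

/-- For every `w ∈ ℝ⁵`, `3|S[w]| ≤ ‖w‖³`; in particular, if `‖w‖ = 1` then
`1 − 3 S[w] ≥ 0`. -/
theorem stmt7 (w : EuclideanSpace ℝ (Fin 5)) :
    3 * |S5 w| ≤ ‖w‖ ^ 3 ∧ (‖w‖ = 1 → 0 ≤ 1 - 3 * S5 w) := by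
  set a := w 0; set b := w 1; set c := w 2; set d := w 3; set e := w 4
  have hs : Real.sqrt 3 ^ 2 = 3 := Real.sq_sqrt (by norm_num)
  have hS : S5 w = -c * (a^2 + b^2) + Real.sqrt 3 * b * d * e +
      (1/2) * c * (d^2 + e^2) + (1/3) * c^3 + (Real.sqrt 3/2) * a * (d^2 - e^2) := by
    simp only [S5]
    rfl
  have hQ : ‖w‖ ^ 2 = a^2 + b^2 + c^2 + d^2 + e^2 := by
    rw [EuclideanSpace.norm_eq, Real.sq_sqrt (by positivity)]
    simp [Fin.sum_univ_five, Real.norm_eq_abs, sq_abs]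
    rfl
  have hkey : 9 * (S5 w)^2 ≤ (‖w‖ ^ 3) ^ 2 := by
    have h := sos_nonneg a b c d e (Real.sqrt 3) hs
    rw [hS]
    calc 9 * (-c * (a^2 + b^2) + Real.sqrt 3 * b * d * e +
        (1/2) * c * (d^2 + e^2) + (1/3) * c^3 + (Real.sqrt 3/2) * a * (d^2 - e^2))^2
        ≤ (a^2 + b^2 + c^2 + d^2 + e^2)^3 := h
      _ = (‖w‖ ^ 3) ^ 2 := by rw [← hQ]; ring
  have h1 : 3 * |S5 w| ≤ ‖w‖ ^ 3 := by
    nlinarith [hkey, abs_nonneg (S5 w), sq_abs (S5 w), pow_nonneg (norm_nonneg w) 3,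
      sq_nonneg (3 * |S5 w| - ‖w‖ ^ 3)]
  refine ⟨h1, fun hw => ?_⟩
  rw [hw] at h1
  have := le_abs_self (S5 w)
  linarith
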